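/- arXiv:2605.16245 — 4 statements merged into one kernel-verified Lean document; each statement's English description precedes it below -/
import Mathlib

section
/- (Proposition 2.) Let x̃ = (I − mC)^{-1}·[Λ x(0) + (1−m) ν (I−Λ) 𝟏] be the equilibrium of the AI-mediated opinion dynamics and x* = (I − C)^{-1} Λ x(0) the equilibrium of the standard Friedkin–Johnsen dynamics. Then x̃ − x* = (1 − m)·(I − mC)^{-1}·(I − Λ)·[ν·𝟏 − W x*]. -/
open Matrix BigOperators

attribute [local instance] Matrix.linftyOpNormedRing Matrix.linftyOpNormedAlgebra

/-- Proposition 2: With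
`x̃ = (I − mC)⁻¹·[Λ x(0) + (1−m) ν (I−Λ) 𝟏]` and `x* = (I − C)⁻¹ Λ x(0)`, we have
`x̃ − x* = (1 − m)·(I − mC)⁻¹·(I − Λ)·[ν·𝟏 − W x*]`. -/
theorem stmt8 (N : ℕ) (hN : 1 ≤ N)
    (W : Matrix (Fin N) (Fin N) ℝ)
    (hWpos : ∀ i j, 0 ≤ W i j) (hWrow : ∀ i, ∑ j, W i j = 1)
    (lam : Fin N → ℝ) (hlam : ∀ i, lam i ∈ Set.Ioo (0 : ℝ) 1)
    (m : ℝ) (hm : m ∈ Set.Ioo (0 : ℝ) 1) (ν : ℝ) (hν : ν ∈ Set.Icc (0 : ℝ) 1)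
    (C : Matrix (Fin N) (Fin N) ℝ) (hC : C = (1 - Matrix.diagonal lam) * W)
    (x0 : Fin N → ℝ)
    (xt : Fin N → ℝ)
    (hxt : xt = (1 - m • C)⁻¹ *ᵥ
      (Matrix.diagonal lam *ᵥ x0
        + ((1 - m) * ν) • ((1 - Matrix.diagonal lam) *ᵥ (1 : Fin N → ℝ))))
    (xs : Fin N → ℝ) (hxs : xs = (1 - C)⁻¹ *ᵥ (Matrix.diagonal lam *ᵥ x0)) :
    xt - xs = (1 - m) •
      (((1 - m • C)⁻¹ * (1 - Matrix.diagonal lam)) *ᵥ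
        (ν • (1 : Fin N → ℝ) - W *ᵥ xs)) := by
  -- entries of C
  have hCentry : ∀ i j, C i j = (1 - lam i) * W i j := by
    intro i j
    simp [hC, Matrix.mul_apply, Matrix.sub_apply, Matrix.one_apply, sub_mul,
      Finset.sum_sub_distrib, Matrix.diagonal, Finset.sum_ite_eq,
      Matrix.one_mul]
  -- norm of C is < 1
  have hCnn : ‖C‖₊ < 1 := by
    rw [Matrix.linfty_opNNNorm_def]
    rw [Finset.sup_lt_iff (by norm_num : (⊥ : NNReal) < 1)]
    intro i _
    have h1 : ((∑ j, ‖C i j‖₊ : NNReal) : ℝ) = 1 - lam i := by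
      push_cast [coe_nnnorm]
      have : ∀ j, ‖C i j‖ = (1 - lam i) * W i j := by
        intro j
        rw [hCentry i j, Real.norm_eq_abs, abs_of_nonneg]
        exact mul_nonneg (by linarith [(hlam i).2]) (hWpos i j)
      simp only [this, ← Finset.mul_sum, hWrow i, mul_one]
    have : ((∑ j, ‖C i j‖₊ : NNReal) : ℝ) < 1 := by
      rw [h1]; linarith [(hlam i).1]
    exact_mod_cast this
  have hCn : ‖C‖ < 1 := by exact_mod_cast hCnn
  have hCnonneg : (0:ℝ) ≤ ‖C‖ := norm_nonneg _
  have hmCn : ‖m • C‖ < 1 := by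
    rw [norm_smul, Real.norm_eq_abs, abs_of_pos hm.1]
    nlinarith [hm.1, hm.2]
  have hA : IsUnit (1 - m • C) := isUnit_one_sub_of_norm_lt_one hmCn
  have hB : IsUnit (1 - C) := isUnit_one_sub_of_norm_lt_one hCn
  have hAdet : IsUnit (1 - m • C).det := (Matrix.isUnit_iff_isUnit_det _).mp hA
  have hBdet : IsUnit (1 - C).det := (Matrix.isUnit_iff_isUnit_det _).mp hB
  letI : Invertible (1 - m • C) := (1 - m • C).invertibleOfIsUnitDet hAdet
  have hBxs : (1 - C) *ᵥ xs = Matrix.diagonal lam *ᵥ x0 := by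
    rw [hxs, Matrix.mulVec_mulVec, Matrix.mul_nonsing_inv _ hBdet, Matrix.one_mulVec]
  apply Matrix.mulVec_injective_of_invertible (1 - m • C)
  -- LHS
  have hxt' : (1 - m • C) *ᵥ xt = Matrix.diagonal lam *ᵥ x0
      + ((1 - m) * ν) • ((1 - Matrix.diagonal lam) *ᵥ (1 : Fin N → ℝ)) := by
    rw [hxt, Matrix.mulVec_mulVec, Matrix.mul_nonsing_inv _ hAdet, Matrix.one_mulVec]
  have hCxs : C *ᵥ xs = (1 - Matrix.diagonal lam) *ᵥ (W *ᵥ xs) := by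
    rw [hC, Matrix.mulVec_mulVec]
  have hxs' : xs - C *ᵥ xs = Matrix.diagonal lam *ᵥ x0 := by
    rw [← hBxs, Matrix.sub_mulVec, Matrix.one_mulVec]
  -- RHS
  have hRHS : (1 - m • C) *ᵥ ((1 - m) •
      (((1 - m • C)⁻¹ * (1 - Matrix.diagonal lam)) *ᵥ
        (ν • (1 : Fin N → ℝ) - W *ᵥ xs)))
      = (1 - m) • ((1 - Matrix.diagonal lam) *ᵥ
        (ν • (1 : Fin N → ℝ) - W *ᵥ xs)) := by
    rw [Matrix.mulVec_smul, Matrix.mulVec_mulVec, ← Matrix.mul_assoc,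
      Matrix.mul_nonsing_inv _ hAdet, Matrix.one_mul]
  rw [hRHS, Matrix.mulVec_sub, hxt']
  have hAxs : (1 - m • C) *ᵥ xs = xs - m • (C *ᵥ xs) := by
    rw [Matrix.sub_mulVec, Matrix.one_mulVec, Matrix.smul_mulVec]
  rw [hAxs, Matrix.mulVec_sub, Matrix.mulVec_smul]
  rw [← hxs', hCxs]
  module
end

section
/- If every entry of the vector ν·𝟏 − W x* is nonnegative, then x̃ ≥ x* entrywise, where x̃ = (I − mC)^{-1}·[Λ x(0) + (1−m) ν (I−Λ) 𝟏] and x* = (I − C)^{-1} Λ x(0); symmetrically, if every entry of ν·𝟏 − W x* is nonpositive, then x̃ ≤ x* entrywise. -/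
/-!
Since `(I − C) x* = Λ x(0)`, a one-line computation gives
`(I − mC) x̃ = (I − mC) x* + (1 − m)(I − Λ)(ν𝟏 − W x*)`.
The matrix `I − mC` is monotone (`(I − mC) x ≤ (I − mC) y` forces `x ≤ y`) because `mC`
is nonnegative with row sums `m(1 − λᵢ) < 1`: at a minimal coordinate `zᵢ` of `z = y − x`
one gets `0 ≤ (1 − ∑ⱼ (mC)ᵢⱼ) zᵢ`. So `x̃ − x*` carries the sign of `ν𝟏 − W x*`.
-/

open Matrix

namespace Matrix

variable {n : Type*} [Fintype n] [DecidableEq n]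

def IsStrictlySubstochastic (B : Matrix n n ℝ) : Prop :=
  (∀ i j, 0 ≤ B i j) ∧ ∀ i, ∑ j, B i j < 1

namespace IsStrictlySubstochastic

variable {B : Matrix n n ℝ}

theorem nonneg_of_one_sub_mulVec_nonneg (hB : B.IsStrictlySubstochastic) {z : n → ℝ}
    (hz : 0 ≤ (1 - B) *ᵥ z) : 0 ≤ z := by
  intro j
  have : Nonempty n := ⟨j⟩
  obtain ⟨i, hmin⟩ := Finite.exists_min z
  have hzi : 0 ≤ (1 - ∑ k, B i k) * z i :=
    calc 0 ≤ ((1 - B) *ᵥ z) i := hz i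
      _ = z i - ∑ k, B i k * z k := by rw [sub_mulVec, one_mulVec]; rfl
      _ ≤ z i - ∑ k, B i k * z i :=
        sub_le_sub_left (Finset.sum_le_sum fun k _ =>
          mul_le_mul_of_nonneg_left (hmin k) (hB.1 i k)) _
      _ = (1 - ∑ k, B i k) * z i := by rw [← Finset.sum_mul]; ring
  exact (nonneg_of_mul_nonneg_right hzi (sub_pos.2 (hB.2 i))).trans (hmin j)

theorem le_of_one_sub_mulVec_le (hB : B.IsStrictlySubstochastic) {x y : n → ℝ}
    (h : (1 - B) *ᵥ x ≤ (1 - B) *ᵥ y) : x ≤ y :=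
  sub_nonneg.1 <| hB.nonneg_of_one_sub_mulVec_nonneg <| by rwa [mulVec_sub, sub_nonneg]

theorem isUnit_det_one_sub (hB : B.IsStrictlySubstochastic) : IsUnit (1 - B).det :=
  (isUnit_iff_isUnit_det _).1 <| mulVec_injective_iff_isUnit.1 fun _ _ h =>
    le_antisymm (hB.le_of_one_sub_mulVec_le h.le) (hB.le_of_one_sub_mulVec_le h.ge)

end IsStrictlySubstochastic

theorem isStrictlySubstochastic_diagonal_mul {W : Matrix n n ℝ} (hWpos : ∀ i j, 0 ≤ W i j)
    (hWrow : ∀ i, ∑ j, W i j = 1) {d : n → ℝ} (hd0 : 0 ≤ d) (hd1 : ∀ i, d i < 1) :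
    (diagonal d * W).IsStrictlySubstochastic := by
  refine ⟨fun i j => ?_, fun i => ?_⟩
  · rw [diagonal_mul]
    exact mul_nonneg (hd0 i) (hWpos i j)
  · simpa only [diagonal_mul, ← Finset.mul_sum, hWrow i, mul_one] using hd1 i

theorem diagonal_mulVec_nonneg {d v : n → ℝ} (hd : 0 ≤ d) (hv : 0 ≤ v) :
    0 ≤ diagonal d *ᵥ v := fun i => by
  rw [mulVec_diagonal]
  exact mul_nonneg (hd i) (hv i)

theorem diagonal_mulVec_nonpos {d v : n → ℝ} (hd : 0 ≤ d) (hv : v ≤ 0) :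
    diagonal d *ᵥ v ≤ 0 := fun i => by
  rw [mulVec_diagonal]
  exact mul_nonpos_of_nonneg_of_nonpos (hd i) (hv i)

theorem one_sub_smul_mulVec_eq_add {R : Type*} [CommRing R] (C : Matrix n n R) (m : R)
    {a c xs xt : n → R} (hxs : (1 - C) *ᵥ xs = a)
    (hxt : (1 - m • C) *ᵥ xt = a + (1 - m) • c) :
    (1 - m • C) *ᵥ xt = (1 - m • C) *ᵥ xs + (1 - m) • (c - C *ᵥ xs) := by
  rw [hxt, ← hxs]
  simp only [sub_mulVec, one_mulVec, smul_mulVec, smul_sub, sub_smul, one_smul]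
  abel

end Matrix

theorem stmt9_general (N : ℕ)
    (W : Matrix (Fin N) (Fin N) ℝ)
    (hWpos : ∀ i j, 0 ≤ W i j) (hWrow : ∀ i, ∑ j, W i j = 1)
    (lam : Fin N → ℝ) (hlam : ∀ i, lam i ∈ Set.Ioo (0 : ℝ) 1)
    (m : ℝ) (hm : m ∈ Set.Ioo (0 : ℝ) 1) (ν : ℝ)
    (C : Matrix (Fin N) (Fin N) ℝ) (hC : C = (1 - Matrix.diagonal lam) * W)
    (x0 : Fin N → ℝ)
    (xt : Fin N → ℝ)
    (hxt : xt = (1 - m • C)⁻¹ *ᵥ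
      (Matrix.diagonal lam *ᵥ x0
        + ((1 - m) * ν) • ((1 - Matrix.diagonal lam) *ᵥ (1 : Fin N → ℝ))))
    (xs : Fin N → ℝ) (hxs : xs = (1 - C)⁻¹ *ᵥ (Matrix.diagonal lam *ᵥ x0)) :
    ((∀ i, 0 ≤ (ν • (1 : Fin N → ℝ) - W *ᵥ xs) i) → ∀ i, xs i ≤ xt i) ∧
    ((∀ i, (ν • (1 : Fin N → ℝ) - W *ᵥ xs) i ≤ 0) → ∀ i, xt i ≤ xs i) := by
  obtain ⟨hm0, hm1⟩ := hm
  set d : Fin N → ℝ := 1 - lam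
  have hd0 : 0 ≤ d := fun i => sub_nonneg.2 (hlam i).2.le
  have hd1 : ∀ i, d i < 1 := fun i => sub_lt_self 1 (hlam i).1
  have hdiag : 1 - diagonal lam = diagonal d := by rw [← diagonal_one, diagonal_sub]; rfl
  have hC' : C = diagonal d * W := by rw [hC, hdiag]
  have hsC : C.IsStrictlySubstochastic :=
    hC' ▸ isStrictlySubstochastic_diagonal_mul hWpos hWrow hd0 hd1
  have hsmC : (m • C).IsStrictlySubstochastic := by
    rw [hC', ← smul_mul, ← diagonal_smul]
    exact isStrictlySubstochastic_diagonal_mul hWpos hWrow (smul_nonneg hm0.le hd0)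
      fun i => (mul_le_of_le_one_left (hd0 i) hm1.le).trans_lt (hd1 i)
  have hxs' : (1 - C) *ᵥ xs = diagonal lam *ᵥ x0 := by
    rw [hxs, mulVec_mulVec, mul_nonsing_inv _ hsC.isUnit_det_one_sub, one_mulVec]
  have hxt' :
      (1 - m • C) *ᵥ xt = diagonal lam *ᵥ x0 + (1 - m) • (ν • diagonal d *ᵥ 1) := by
    rw [hxt, mulVec_mulVec, mul_nonsing_inv _ hsmC.isUnit_det_one_sub, one_mulVec, hdiag, mul_smul]
  have key : (1 - m • C) *ᵥ xt
      = (1 - m • C) *ᵥ xs + (1 - m) • (diagonal d *ᵥ (ν • 1 - W *ᵥ xs)) := by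
    rw [one_sub_smul_mulVec_eq_add C m hxs' hxt', hC', ← mulVec_mulVec, mulVec_sub, mulVec_smul]
  have hm' : 0 ≤ 1 - m := sub_nonneg.2 hm1.le
  constructor
  · intro hv
    refine hsmC.le_of_one_sub_mulVec_le (key ▸ le_add_of_nonneg_right ?_)
    exact smul_nonneg hm' (diagonal_mulVec_nonneg hd0 hv)
  · intro hv
    refine hsmC.le_of_one_sub_mulVec_le (key ▸ add_le_of_nonpos_right ?_)
    exact smul_nonpos_of_nonneg_of_nonpos hm' (diagonal_mulVec_nonpos hd0 hv)

/-- If every entry of `ν·𝟏 − W x*` is nonnegative then `x̃ ≥ x*`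
entrywise; symmetrically, if every entry of `ν·𝟏 − W x*` is nonpositive then
`x̃ ≤ x*` entrywise, where
`x̃ = (I − mC)⁻¹·[Λ x(0) + (1−m) ν (I−Λ) 𝟏]` and `x* = (I − C)⁻¹ Λ x(0)`. -/
theorem stmt9 (N : ℕ) (hN : 1 ≤ N)
    (W : Matrix (Fin N) (Fin N) ℝ)
    (hWpos : ∀ i j, 0 ≤ W i j) (hWrow : ∀ i, ∑ j, W i j = 1)
    (lam : Fin N → ℝ) (hlam : ∀ i, lam i ∈ Set.Ioo (0 : ℝ) 1)
    (m : ℝ) (hm : m ∈ Set.Ioo (0 : ℝ) 1) (ν : ℝ) (hν : ν ∈ Set.Icc (0 : ℝ) 1)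
    (C : Matrix (Fin N) (Fin N) ℝ) (hC : C = (1 - Matrix.diagonal lam) * W)
    (x0 : Fin N → ℝ)
    (xt : Fin N → ℝ)
    (hxt : xt = (1 - m • C)⁻¹ *ᵥ
      (Matrix.diagonal lam *ᵥ x0
        + ((1 - m) * ν) • ((1 - Matrix.diagonal lam) *ᵥ (1 : Fin N → ℝ))))
    (xs : Fin N → ℝ) (hxs : xs = (1 - C)⁻¹ *ᵥ (Matrix.diagonal lam *ᵥ x0)) :
    ((∀ i, 0 ≤ (ν • (1 : Fin N → ℝ) - W *ᵥ xs) i) → ∀ i, xs i ≤ xt i) ∧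
    ((∀ i, (ν • (1 : Fin N → ℝ) - W *ᵥ xs) i ≤ 0) → ∀ i, xt i ≤ xs i) :=
  stmt9_general N W hWpos hWrow lam hlam m hm ν C hC x0 xt hxt xs hxs
end

section
/- (Proposition 3.) Suppose λ_i = λ ∈ (0,1) for all i and W is doubly stochastic. Let x̄ = (1/N)·Σ_i x̃_i and x̄* = (1/N)·Σ_i x*_i be the average entries of the AI-mediated equilibrium x̃ and the standard Friedkin–Johnsen equilibrium x*, respectively. Then x̄ − x̄* = [(1−λ)/(λ + (1−λ)(1−m))] · B_one-off(f_lin, x(0)), and the scaling factor (1−λ)/(λ + (1−λ)(1−m)) exceeds 1 if and only if m·(1−λ) > λ. -/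
open Matrix BigOperators

/-! Both equilibria have the form `(1 - t • W)⁻¹ *ᵥ v` with `|t| < 1`. Since `W` is
column-stochastic, `1 ᵥ* (1 - t • W) = (1 - t) • 1`, so summing the entries turns each matrix
equation into a scalar one: `(1 - m(1-λ)) ∑ x̃ = λ ∑ x(0) + (1-m)ν(1-λ)N` and `λ ∑ x* = λ ∑ x(0)`.
The inverse is genuine because `W` is row-stochastic, so `‖t • W‖ < 1` in the `ℓ∞` operator norm
and the Neumann series converges. The rest is algebra, using `λ + (1-λ)(1-m) = 1 - m(1-λ)`. -/

namespace Matrix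

variable {n : Type*} [Fintype n] [DecidableEq n]

section linfty

attribute [local instance] Matrix.linftyOpNormedRing Matrix.linftyOpNormedAlgebra

lemma linfty_opNorm_le_one_of_mem_rowStochastic {W : Matrix n n ℝ}
    (hW : W ∈ rowStochastic ℝ n) : ‖W‖ ≤ 1 := by
  rw [linfty_opNorm_def, NNReal.coe_le_one, Finset.sup_le_iff]
  intro i _
  rw [← NNReal.coe_le_one]
  push_cast
  simp only [Real.norm_of_nonneg (nonneg_of_mem_rowStochastic hW),
    sum_row_of_mem_rowStochastic hW i, le_refl]

lemma isUnit_one_sub_smul_of_mem_rowStochastic {W : Matrix n n ℝ}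
    (hW : W ∈ rowStochastic ℝ n) {t : ℝ} (ht : |t| < 1) : IsUnit (1 - t • W) := by
  have hnorm : ‖t • W‖ < 1 := calc
    ‖t • W‖ ≤ ‖t‖ * ‖W‖ := norm_smul_le t W
    _ ≤ |t| * 1 := by
        rw [Real.norm_eq_abs]
        gcongr
        exact linfty_opNorm_le_one_of_mem_rowStochastic hW
    _ < 1 := by rwa [mul_one]
  exact (Units.oneSub _ hnorm).isUnit

end linfty

lemma mul_sum_inv_mulVec_of_one_vecMul_eq {R : Type*} [CommRing R] {M : Matrix n n R} {c : R}
    (hM : 1 ᵥ* M = c • 1) (hdet : IsUnit M.det) (v : n → R) :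
    c * ∑ i, (M⁻¹ *ᵥ v) i = ∑ i, v i := by
  calc c * ∑ i, (M⁻¹ *ᵥ v) i = (1 ᵥ* M) ⬝ᵥ (M⁻¹ *ᵥ v) := by
        simp [hM, smul_dotProduct, one_dotProduct]
    _ = ∑ i, v i := by
        rw [← dotProduct_mulVec, mulVec_mulVec, mul_nonsing_inv M hdet, one_mulVec, one_dotProduct]

lemma one_vecMul_one_sub_smul_of_mem_colStochastic {W : Matrix n n ℝ}
    (hW : W ∈ colStochastic ℝ n) (t : ℝ) : 1 ᵥ* (1 - t • W) = (1 - t) • 1 := by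
  rw [vecMul_sub, vecMul_one, vecMul_smul, one_vecMul_of_mem_colStochastic hW, sub_smul, one_smul]

lemma mul_sum_inv_one_sub_smul_mulVec {W : Matrix n n ℝ} (hW : W ∈ doublyStochastic ℝ n)
    {t : ℝ} (ht : |t| < 1) (v : n → ℝ) :
    (1 - t) * ∑ i, ((1 - t • W)⁻¹ *ᵥ v) i = ∑ i, v i := by
  rw [doublyStochastic_eq_rowStochastic_inf_colStochastic] at hW
  refine mul_sum_inv_mulVec_of_one_vecMul_eq
    (one_vecMul_one_sub_smul_of_mem_colStochastic hW.2 t) ?_ v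
  exact (isUnit_iff_isUnit_det _).mp (isUnit_one_sub_smul_of_mem_rowStochastic hW.1 ht)

end Matrix

theorem stmt13_general (N : ℕ)
    (W : Matrix (Fin N) (Fin N) ℝ)
    (hWpos : ∀ i j, 0 ≤ W i j)
    (hWrow : ∀ i, ∑ j, W i j = 1)
    (hWcol : ∀ j, ∑ i, W i j = 1)
    (lam : ℝ) (hlam : lam ∈ Set.Ioo (0 : ℝ) 1)
    (m : ℝ) (hm : m ∈ Set.Ioo (0 : ℝ) 1) (ν : ℝ)
    (C : Matrix (Fin N) (Fin N) ℝ) (hC : C = (1 - lam) • W)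
    (x0 : Fin N → ℝ)
    (xt : Fin N → ℝ)
    (hxt : xt = (1 - m • C)⁻¹ *ᵥ
      (lam • x0 + ((1 - m) * ν * (1 - lam)) • (1 : Fin N → ℝ)))
    (xs : Fin N → ℝ) (hxs : xs = (1 - C)⁻¹ *ᵥ (lam • x0))
    (flin : ℝ → ℝ) (hf : ∀ x, flin x = m * x + (1 - m) * ν)
    (B : ℝ) (hB : B = (1 / (N : ℝ)) * ∑ i, (flin (x0 i) - x0 i))
    (xbar : ℝ) (hxbar : xbar = (1 / (N : ℝ)) * ∑ i, xt i)
    (xbars : ℝ) (hxbars : xbars = (1 / (N : ℝ)) * ∑ i, xs i) :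
    xbar - xbars = ((1 - lam) / (lam + (1 - lam) * (1 - m))) * B ∧
    (1 < (1 - lam) / (lam + (1 - lam) * (1 - m)) ↔ lam < m * (1 - lam)) := by
  obtain ⟨hlam0, hlam1⟩ := hlam
  obtain ⟨hm0, hm1⟩ := hm
  have hW : W ∈ doublyStochastic ℝ (Fin N) :=
    mem_doublyStochastic_iff_sum.2 ⟨hWpos, hWrow, hWcol⟩
  have hden : 0 < lam + (1 - lam) * (1 - m) := by nlinarith
  have hsum_xt : ∑ i, xt i =
      (lam * ∑ i, x0 i + (1 - m) * ν * (1 - lam) * N) / (lam + (1 - lam) * (1 - m)) := by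
    have hmC : m • C = (m * (1 - lam)) • W := by rw [hC, smul_smul]
    rw [eq_div_iff hden.ne', mul_comm,
      show lam + (1 - lam) * (1 - m) = 1 - m * (1 - lam) by ring, hxt, hmC,
      mul_sum_inv_one_sub_smul_mulVec hW (by rw [abs_lt]; constructor <;> nlinarith)]
    simp [Finset.sum_add_distrib, Finset.mul_sum, mul_comm]
  have hsum_xs : ∑ i, xs i = ∑ i, x0 i := by
    have h := mul_sum_inv_one_sub_smul_mulVec hW (t := 1 - lam)
      (by rw [abs_lt]; constructor <;> linarith) (lam • x0)
    rw [← hC, ← hxs, sub_sub_cancel] at h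
    simpa [← Finset.mul_sum, hlam0.ne'] using h
  have hB' : B = (1 / (N : ℝ)) * ((m - 1) * ∑ i, x0 i + (1 - m) * ν * N) := by
    simp only [hB, hf, Finset.sum_sub_distrib, Finset.sum_add_distrib, ← Finset.mul_sum,
      Finset.sum_const, Finset.card_univ, Fintype.card_fin, nsmul_eq_mul]
    ring
  refine ⟨?_, ?_⟩
  · rw [hxbar, hxbars, hB', hsum_xs, hsum_xt]
    field_simp
    ring
  · rw [one_lt_div hden]
    constructor <;> intro h <;> linarith

/-- Proposition 3: With uniform stubbornness `λ` and `W` doubly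
stochastic, the averages `x̄` and `x̄*` of the AI-mediated equilibrium
`x̃ = (I − mC)⁻¹·[Λ x(0) + (1−m) ν (I−Λ) 𝟏]` (with `Λ = λI`, `C = (1−λ)W`) and
the Friedkin–Johnsen equilibrium `x* = (I − C)⁻¹ Λ x(0)` satisfy
`x̄ − x̄* = [(1−λ)/(λ + (1−λ)(1−m))]·B_one-off(f_lin, x(0))`, and the scaling
factor exceeds 1 iff `m(1−λ) > λ`. -/
theorem stmt13 (N : ℕ) (hN : 1 ≤ N)
    (W : Matrix (Fin N) (Fin N) ℝ)
    (hWpos : ∀ i j, 0 ≤ W i j)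
    (hWrow : ∀ i, ∑ j, W i j = 1)
    (hWcol : ∀ j, ∑ i, W i j = 1)
    (lam : ℝ) (hlam : lam ∈ Set.Ioo (0 : ℝ) 1)
    (m : ℝ) (hm : m ∈ Set.Ioo (0 : ℝ) 1) (ν : ℝ) (hν : ν ∈ Set.Icc (0 : ℝ) 1)
    (C : Matrix (Fin N) (Fin N) ℝ) (hC : C = (1 - lam) • W)
    (x0 : Fin N → ℝ)
    (xt : Fin N → ℝ)
    (hxt : xt = (1 - m • C)⁻¹ *ᵥ
      (lam • x0 + ((1 - m) * ν * (1 - lam)) • (1 : Fin N → ℝ)))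
    (xs : Fin N → ℝ) (hxs : xs = (1 - C)⁻¹ *ᵥ (lam • x0))
    (flin : ℝ → ℝ) (hf : ∀ x, flin x = m * x + (1 - m) * ν)
    (B : ℝ) (hB : B = (1 / (N : ℝ)) * ∑ i, (flin (x0 i) - x0 i))
    (xbar : ℝ) (hxbar : xbar = (1 / (N : ℝ)) * ∑ i, xt i)
    (xbars : ℝ) (hxbars : xbars = (1 / (N : ℝ)) * ∑ i, xs i) :
    xbar - xbars = ((1 - lam) / (lam + (1 - lam) * (1 - m))) * B ∧
    (1 < (1 - lam) / (lam + (1 - lam) * (1 - m)) ↔ lam < m * (1 - lam)) :=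
  stmt13_general N W hWpos hWrow hWcol lam hlam m hm ν C hC x0 xt hxt xs hxs flin hf B hB xbar hxbar
    xbars hxbars
end

section
/- Suppose λ_i = λ ∈ (0,1) for all i and W is doubly stochastic. Then the averages x̄ = (1/N)·Σ_i x̃_i and x̄* = (1/N)·Σ_i x*_i of the AI-mediated and Friedkin–Johnsen equilibria satisfy x̄ − x̄* = [(1−m)(1−λ)/(1 − m(1−λ))]·(ν − x̄*). -/
open Matrix BigOperators

lemma aux_det_ne {N : ℕ} (t : ℝ) (ht0 : 0 ≤ t) (ht1 : t < 1)
    (W : Matrix (Fin N) (Fin N) ℝ) (hWpos : ∀ i j, 0 ≤ W i j)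
    (hWcol : ∀ j, ∑ i, W i j = 1) :
    IsUnit ((1 : Matrix (Fin N) (Fin N) ℝ) - t • W).det := by
  rw [isUnit_iff_ne_zero]
  apply det_ne_zero_of_sum_col_lt_diag
  intro k
  have hWkk : W k k ≤ 1 := by
    rw [← hWcol k]
    exact Finset.single_le_sum (fun i _ => hWpos i k) (Finset.mem_univ k)
  have h1 : ∑ i ∈ Finset.univ.erase k, ‖((1 : Matrix (Fin N) (Fin N) ℝ) - t • W) i k‖
      = t * (1 - W k k) := by
    have : ∀ i ∈ Finset.univ.erase k,
        ‖((1 : Matrix (Fin N) (Fin N) ℝ) - t • W) i k‖ = t * W i k := by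
      intro i hi
      have hik : i ≠ k := (Finset.mem_erase.mp hi).1
      simp [Matrix.sub_apply, Matrix.smul_apply, Matrix.one_apply_ne hik,
        abs_of_nonneg ht0, abs_of_nonneg (hWpos i k)]
    rw [Finset.sum_congr rfl this, ← Finset.mul_sum]
    congr 1
    have := Finset.sum_erase_eq_sub (f := fun i => W i k) (Finset.mem_univ k)
    rw [this, hWcol k]
  rw [h1]
  have h2 : ((1 : Matrix (Fin N) (Fin N) ℝ) - t • W) k k = 1 - t * W k k := by
    simp [Matrix.sub_apply, Matrix.smul_apply, Matrix.one_apply_eq]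
  rw [h2]
  have htw : t * W k k < 1 := lt_of_le_of_lt
    (mul_le_of_le_one_right ht0 hWkk) ht1
  rw [Real.norm_eq_abs, abs_of_nonneg (by linarith)]
  nlinarith

lemma aux_sum_inv_mulVec {N : ℕ} (A : Matrix (Fin N) (Fin N) ℝ)
    (hA : IsUnit A.det) (s : ℝ) (hs : ∀ j, ∑ i, A i j = s) (b : Fin N → ℝ) :
    ∑ i, b i = s * ∑ j, (A⁻¹ *ᵥ b) j := by
  have hAb : A *ᵥ (A⁻¹ *ᵥ b) = b := by
    rw [Matrix.mulVec_mulVec, A.mul_nonsing_inv hA, Matrix.one_mulVec]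
  conv_lhs => rw [← hAb]
  simp only [Matrix.mulVec, dotProduct]
  rw [Finset.sum_comm, Finset.mul_sum]
  refine Finset.sum_congr rfl fun j _ => ?_
  rw [← Finset.sum_mul, hs j, mul_comm]

/-- With uniform stubbornness `λ` and `W` doubly stochastic, the
averages `x̄` and `x̄*` of the AI-mediated equilibrium
`x̃ = (I − mC)⁻¹·[Λ x(0) + (1−m) ν (I−Λ) 𝟏]` (with `Λ = λI`, `C = (1−λ)W`) and
the Friedkin–Johnsen equilibrium `x* = (I − C)⁻¹ Λ x(0)` satisfy
`x̄ − x̄* = [(1−m)(1−λ)/(1 − m(1−λ))]·(ν − x̄*)`. -/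
theorem stmt14 (N : ℕ) (hN : 1 ≤ N)
    (W : Matrix (Fin N) (Fin N) ℝ)
    (hWpos : ∀ i j, 0 ≤ W i j)
    (hWrow : ∀ i, ∑ j, W i j = 1)
    (hWcol : ∀ j, ∑ i, W i j = 1)
    (lam : ℝ) (hlam : lam ∈ Set.Ioo (0 : ℝ) 1)
    (m : ℝ) (hm : m ∈ Set.Ioo (0 : ℝ) 1) (ν : ℝ) (hν : ν ∈ Set.Icc (0 : ℝ) 1)
    (C : Matrix (Fin N) (Fin N) ℝ) (hC : C = (1 - lam) • W)
    (x0 : Fin N → ℝ)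
    (xt : Fin N → ℝ)
    (hxt : xt = (1 - m • C)⁻¹ *ᵥ
      (lam • x0 + ((1 - m) * ν * (1 - lam)) • (1 : Fin N → ℝ)))
    (xs : Fin N → ℝ) (hxs : xs = (1 - C)⁻¹ *ᵥ (lam • x0))
    (xbar : ℝ) (hxbar : xbar = (1 / (N : ℝ)) * ∑ i, xt i)
    (xbars : ℝ) (hxbars : xbars = (1 / (N : ℝ)) * ∑ i, xs i) :
    xbar - xbars = ((1 - m) * (1 - lam) / (1 - m * (1 - lam))) * (ν - xbars) := by
  obtain ⟨hl0, hl1⟩ := hlam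
  obtain ⟨hm0, hm1⟩ := hm
  have hNpos : (0 : ℝ) < N := by exact_mod_cast hN
  have ht1 : m * (1 - lam) < 1 := by nlinarith
  have ht0 : 0 ≤ m * (1 - lam) := by nlinarith
  have hmC : m • C = (m * (1 - lam)) • W := by rw [hC, smul_smul]
  have hC' : C = ((1 - lam)) • W := hC
  -- determinants
  have hdet1 : IsUnit ((1 : Matrix (Fin N) (Fin N) ℝ) - m • C).det := by
    rw [hmC]; exact aux_det_ne _ ht0 ht1 W hWpos hWcol
  have hdet2 : IsUnit ((1 : Matrix (Fin N) (Fin N) ℝ) - C).det := by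
    rw [hC']; exact aux_det_ne _ (by linarith) (by linarith) W hWpos hWcol
  -- column sums
  have hcs : ∀ (t : ℝ) (j : Fin N),
      ∑ i, ((1 : Matrix (Fin N) (Fin N) ℝ) - t • W) i j = 1 - t := by
    intro t j
    simp only [Matrix.sub_apply, Matrix.smul_apply, smul_eq_mul, Finset.sum_sub_distrib,
      ← Finset.mul_sum, hWcol j]
    simp [Finset.sum_ite_eq, Matrix.one_apply]
  -- sums of equilibria
  have hsum1 : ∑ i, (lam • x0 + ((1 - m) * ν * (1 - lam)) • (1 : Fin N → ℝ)) i
      = (1 - m * (1 - lam)) * ∑ j, xt j := by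
    rw [hxt, hmC]
    exact aux_sum_inv_mulVec _ (by rw [← hmC]; exact hdet1) _ (hcs _) _
  have hsum2 : ∑ i, (lam • x0) i = (1 - (1 - lam)) * ∑ j, xs j := by
    rw [hxs, hC']
    exact aux_sum_inv_mulVec _ (by rw [← hC']; exact hdet2) _ (hcs _) _
  have hb1 : ∑ i, (lam • x0 + ((1 - m) * ν * (1 - lam)) • (1 : Fin N → ℝ)) i
      = lam * (∑ i, x0 i) + (N : ℝ) * ((1 - m) * ν * (1 - lam)) := by
    simp [Finset.sum_add_distrib, Finset.mul_sum, mul_comm]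
  have hb2 : ∑ i, (lam • x0) i = lam * ∑ i, x0 i := by
    simp [Finset.mul_sum]
  rw [hb1] at hsum1
  rw [hb2] at hsum2
  have hxs0 : ∑ i, x0 i = ∑ j, xs j := by
    have : (1 - (1 - lam)) = lam := by ring
    rw [this] at hsum2
    exact mul_left_cancel₀ (ne_of_gt hl0) hsum2
  have hs1ne : (1 : ℝ) - m * (1 - lam) ≠ 0 := by linarith
  rw [hxbar, hxbars]
  rw [hxs0] at hsum1
  field_simp
  nlinarith [hsum1]
end
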